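/- arXiv:0803.3118 — 7 statements merged into one kernel-verified Lean document; each statement's English description precedes it below -/
import Mathlib

section
/- Let R be a commutative ring and let (Ψ_d)_{d≥1} be a family of maps Ψ_d : R → R such that each Ψ_d is additive, Ψ_1 is the identity, and Ψ_i ∘ Ψ_j = Ψ_{ij} for all i, j ≥ 1. Suppose B, C : ℕ → R satisfy, for every n ≥ 1, ∑_{(k,m)} Ψ_m(k·B_k) = C_n, where the sum is over all ordered pairs (k,m) of positive integers with k·m = n. Then for every n ≥ 1, n·B_n = ∑_{d ∣ n} μ(d)·Ψ_d(C_{n/d}), where μ is the Möbius function and the sum is over the positive divisors d of n. -/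
/-!
The Adams operations form an arithmetic function `P` with values in the (noncommutative) ring
`AddMonoid.End R`, and the hypotheses say that `P` is completely multiplicative. The Dirichlet
inverse of a completely multiplicative function is its pointwise product with `μ`, and the
hypothesis on `B` and `C` says that `C` is the Dirichlet convolution of `P` with `k ↦ k • B k`;
convolving it with `μ · P` recovers `k • B k`.
-/

open scoped ArithmeticFunction
open scoped ArithmeticFunction.Moebius

namespace ArithmeticFunction

open Finset

theorem pmul_moebius_mul_eq_one {S : Type*} [Ring S] {P : ArithmeticFunction S}
    (h1 : P 1 = 1) (hmul : ∀ i j, P (i * j) = P i * P j) :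
    pmul (μ : ArithmeticFunction S) P * P = 1 := by
  ext n
  have hsum : ∑ x ∈ n.divisorsAntidiagonal, (μ x.1 : S) = (1 : ArithmeticFunction S) n := by
    rw [← coe_moebius_mul_coe_zeta, mul_apply]
    refine sum_congr rfl fun x hx => ?_
    simp [Nat.right_ne_zero_of_mem_divisorsAntidiagonal hx]
  calc (pmul (μ : ArithmeticFunction S) P * P) n
      = ∑ x ∈ n.divisorsAntidiagonal, (μ x.1 : S) * P n := by
        refine mul_apply.trans (sum_congr rfl fun x hx => ?_)
        rw [pmul_apply, intCoe_apply, mul_assoc, ← hmul, (Nat.mem_divisorsAntidiagonal.1 hx).1]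
    _ = (1 : ArithmeticFunction S) n := by
        rw [← sum_mul, hsum, one_apply]
        split_ifs with hn
        · rw [hn, h1, one_mul]
        · exact zero_mul _

section OfFunction

variable {R M : Type*} [AddCommMonoid M]

def ofFunction (f : ℕ → M) : ArithmeticFunction M :=
  ⟨fun n => if n = 0 then 0 else f n, if_pos rfl⟩

theorem ofFunction_apply (f : ℕ → M) {n : ℕ} (hn : n ≠ 0) : ofFunction f n = f n :=
  if_neg hn

theorem smul_ofFunction_apply [Zero R] [SMul R M] (F : ArithmeticFunction R) (f : ℕ → M)
    (n : ℕ) : (F • ofFunction f) n = ∑ x ∈ n.divisorsAntidiagonal, F x.1 • f x.2 :=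
  smul_apply.trans <| sum_congr rfl fun x hx => by
    rw [ofFunction_apply f (Nat.right_ne_zero_of_mem_divisorsAntidiagonal hx)]

end OfFunction

section AddMonoidEnd

variable {M : Type*} [AddCommGroup M]

theorem sum_moebius_smul_apply_eq_of_sum_apply_eq {P : ArithmeticFunction (AddMonoid.End M)}
    (h1 : P 1 = 1) (hmul : ∀ i j, P (i * j) = P i * P j) {f g : ℕ → M}
    (hfg : ∀ n > 0, ∑ x ∈ n.divisorsAntidiagonal, P x.1 (f x.2) = g n) :
    ∀ n > 0, ∑ x ∈ n.divisorsAntidiagonal, μ x.1 • P x.1 (g x.2) = f n := by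
  have hg : ofFunction g = P • ofFunction f := by
    ext n
    rcases n.eq_zero_or_pos with rfl | hn
    · simp
    · simp only [smul_ofFunction_apply, ofFunction_apply _ hn.ne', ← hfg n hn,
        AddMonoid.End.smul_def]
  have hf : ofFunction f = pmul (μ : ArithmeticFunction (AddMonoid.End M)) P • ofFunction g := by
    rw [hg, ← mul_smul', pmul_moebius_mul_eq_one h1 hmul, one_smul']
  intro n hn
  rw [← ofFunction_apply f hn.ne', hf, smul_ofFunction_apply]
  simp only [pmul_apply, intCoe_apply, AddMonoid.End.smul_def, AddMonoid.End.coe_mul,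
    Function.comp_apply, AddMonoid.End.intCast_apply]

def ofAdditiveMaps (Ψ : ℕ → M → M)
    (hadd : ∀ d, 1 ≤ d → ∀ x y : M, Ψ d (x + y) = Ψ d x + Ψ d y) :
    ArithmeticFunction (AddMonoid.End M) :=
  ⟨fun d => if hd : d = 0 then 0 else
    (AddMonoidHom.mk' (Ψ d) (hadd d (Nat.one_le_iff_ne_zero.2 hd)) : AddMonoid.End M),
    dif_pos rfl⟩

section OfAdditiveMaps

variable {Ψ : ℕ → M → M} (hadd : ∀ d, 1 ≤ d → ∀ x y : M, Ψ d (x + y) = Ψ d x + Ψ d y)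

theorem ofAdditiveMaps_apply {d : ℕ} (hd : d ≠ 0) (x : M) : ofAdditiveMaps Ψ hadd d x = Ψ d x :=
  DFunLike.congr_fun (dif_neg hd) x

theorem ofAdditiveMaps_one (hone : ∀ x, Ψ 1 x = x) : ofAdditiveMaps Ψ hadd 1 = 1 :=
  AddMonoidHom.ext fun x => (ofAdditiveMaps_apply hadd one_ne_zero x).trans (hone x)

theorem ofAdditiveMaps_mul (hcomp : ∀ i, 1 ≤ i → ∀ j, 1 ≤ j → ∀ x, Ψ i (Ψ j x) = Ψ (i * j) x)
    (i j : ℕ) :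
    ofAdditiveMaps Ψ hadd (i * j) = ofAdditiveMaps Ψ hadd i * ofAdditiveMaps Ψ hadd j := by
  rcases i.eq_zero_or_pos with rfl | hi
  · simp
  rcases j.eq_zero_or_pos with rfl | hj
  · simp
  ext x
  rw [AddMonoid.End.coe_mul, Function.comp_apply, ofAdditiveMaps_apply hadd hi.ne',
    ofAdditiveMaps_apply hadd hj.ne', ofAdditiveMaps_apply hadd (Nat.mul_pos hi hj).ne',
    hcomp i hi j hj]

end OfAdditiveMaps

end AddMonoidEnd

end ArithmeticFunction

/-- **Inversion formula for power structures (special case).**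
If the Adams operations `Ψ_d` are additive, `Ψ_1 = id` and `Ψ_i ∘ Ψ_j = Ψ_{ij}`,
and the coefficients `B`, `C` satisfy `∑_{km = n} Ψ_m (k • B_k) = C_n` for all `n ≥ 1`,
then `n • B_n = ∑_{d ∣ n} μ(d) • Ψ_d (C_{n/d})`. -/
theorem adams_moebius_inversion (R : Type*) [CommRing R] (Ψ : ℕ → R → R)
    (hadd : ∀ d, 1 ≤ d → ∀ x y : R, Ψ d (x + y) = Ψ d x + Ψ d y)
    (hone : ∀ x : R, Ψ 1 x = x)
    (hcomp : ∀ i, 1 ≤ i → ∀ j, 1 ≤ j → ∀ x : R, Ψ i (Ψ j x) = Ψ (i * j) x)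
    (B C : ℕ → R)
    (hBC : ∀ n : ℕ, 1 ≤ n →
      ∑ p ∈ Nat.divisorsAntidiagonal n, Ψ p.2 ((p.1 : ℤ) • B p.1) = C n) :
    ∀ n : ℕ, 1 ≤ n →
      (n : ℤ) • B n = ∑ d ∈ Nat.divisors n, (μ d : ℤ) • Ψ d (C (n / d)) := by
  open ArithmeticFunction in
  set P := ofAdditiveMaps Ψ hadd
  have hP : ∀ {d}, d ≠ 0 → ∀ x, P d x = Ψ d x := ofAdditiveMaps_apply hadd
  have hPBC : ∀ n > 0, ∑ x ∈ n.divisorsAntidiagonal, P x.1 ((x.2 : ℤ) • B x.2) = C n := by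
    intro n hn
    rw [← hBC n hn]
    exact Finset.sum_equiv (Equiv.prodComm ℕ ℕ) (fun _ => Nat.swap_mem_divisorsAntidiagonal.symm)
      fun x hx => hP (Nat.left_ne_zero_of_mem_divisorsAntidiagonal hx) _
  intro n hn
  calc (n : ℤ) • B n = ∑ x ∈ n.divisorsAntidiagonal, μ x.1 • P x.1 (C x.2) :=
        (sum_moebius_smul_apply_eq_of_sum_apply_eq (f := fun k => (k : ℤ) • B k)
          (ofAdditiveMaps_one hadd hone) (ofAdditiveMaps_mul hadd hcomp) hPBC n hn).symm
    _ = ∑ x ∈ n.divisorsAntidiagonal, (μ x.1 : ℤ) • Ψ x.1 (C x.2) :=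
        Finset.sum_congr rfl fun x hx => by
          rw [hP (Nat.left_ne_zero_of_mem_divisorsAntidiagonal hx)]
    _ = ∑ d ∈ n.divisors, (μ d : ℤ) • Ψ d (C (n / d)) :=
        Nat.sum_divisorsAntidiagonal (fun d m => (μ d : ℤ) • Ψ d (C m))
end

section
/- Let R be a commutative ring and let (Ψ_d)_{d≥1} be a family of maps Ψ_d : R → R such that each Ψ_d is additive and Ψ_1 is the identity (no composition law is assumed). Suppose B, C : ℕ → R satisfy, for every n ≥ 1, ∑_{(k,m)} Ψ_m(k·B_k) = C_n, where the sum is over all ordered pairs (k,m) of positive integers with k·m = n. Then for every n ≥ 1, n·B_n = ∑ (−1)^{s−1} (Ψ_{i_1} ∘ Ψ_{i_2} ∘ ⋯ ∘ Ψ_{i_{s−1}})(C_{i_s}), where the (finite) sum ranges over all finite sequences (i_1, …, i_s) of positive integers, s ≥ 1, with i_1 ⋯ i_s = n and with i_1, …, i_{s−1} all strictly greater than 1 (for s = 1 the summand is C_n). -/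
/-! Splitting off the first entry `i_1` of a sequence flips the sign and, `Ψ_{i_1}` being
additive, turns the right-hand side `S_n` into the recursion
`S_n = C_n - ∑_{1 < m ∣ n} Ψ_m (S_{n/m})`. The hypothesis, with its term `(k, m) = (n, 1)`
split off, says that `n • B_n` satisfies the same recursion, so the two agree by strong
induction on `n`. -/

/-- The finset of all lists of natural numbers of length at most `n`
with all entries at most `n`. -/
def boundedLists (n : ℕ) : Finset (List ℕ) :=
  (Finset.range (n + 1)).biUnion fun s =>
    (Fintype.piFinset fun _ : Fin s => Finset.range (n + 1)).image List.ofFn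

/-- The finset of all finite sequences `(i_1, …, i_s)` of positive integers, `s ≥ 1`,
with `i_1 ⋯ i_s = n` and `i_1, …, i_{s-1}` all strictly greater than `1`.
(Such a sequence necessarily has length at most `n` and all entries at most `n`,
so it belongs to `boundedLists n`.) -/
def factorizationSeqs (n : ℕ) : Finset (List ℕ) :=
  (boundedLists n).filter fun l =>
    l ≠ [] ∧ (∀ i ∈ l, 1 ≤ i) ∧ l.prod = n ∧ ∀ i ∈ l.dropLast, 1 < i

theorem mem_boundedLists {n : ℕ} {l : List ℕ} :
    l ∈ boundedLists n ↔ l.length ≤ n ∧ ∀ i ∈ l, i ≤ n := by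
  simp only [boundedLists, Finset.mem_biUnion, Finset.mem_range, Finset.mem_image,
    Fintype.mem_piFinset, Nat.lt_succ_iff]
  constructor
  · rintro ⟨s, hs, f, hf, rfl⟩
    simpa [List.mem_ofFn] using ⟨hs, fun i => hf i⟩
  · rintro ⟨hlen, hmem⟩
    exact ⟨l.length, hlen, l.get, fun i => hmem _ (l.get_mem i), List.ofFn_get l⟩

theorem List.length_le_prod_of_one_lt_dropLast {l : List ℕ} (hl : l ≠ [])
    (hpos : ∀ i ∈ l, 1 ≤ i) (hdrop : ∀ i ∈ l.dropLast, 1 < i) : l.length ≤ l.prod := by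
  have hlast : 1 ≤ l.getLast hl := hpos _ (l.getLast_mem hl)
  have hpow : 2 ^ l.dropLast.length ≤ l.dropLast.prod := List.pow_card_le_prod _ _ hdrop
  rw [← l.dropLast_append_getLast hl, List.prod_append, List.prod_singleton, List.length_append,
    List.length_singleton]
  calc l.dropLast.length + 1 ≤ 2 ^ l.dropLast.length := Nat.lt_two_pow_self
    _ ≤ l.dropLast.prod * l.getLast hl := hpow.trans (Nat.le_mul_of_pos_right _ hlast)

theorem mem_factorizationSeqs {n : ℕ} {l : List ℕ} :
    l ∈ factorizationSeqs n ↔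
      l ≠ [] ∧ (∀ i ∈ l, 1 ≤ i) ∧ l.prod = n ∧ ∀ i ∈ l.dropLast, 1 < i := by
  refine Finset.mem_filter.trans (and_iff_right_of_imp ?_)
  rintro ⟨hl, hpos, rfl, hdrop⟩
  have hprod : 0 < l.prod := List.prod_pos hpos
  exact mem_boundedLists.2 ⟨List.length_le_prod_of_one_lt_dropLast hl hpos hdrop,
    fun i hi => Nat.le_of_dvd hprod (List.dvd_prod hi)⟩

theorem cons_mem_factorizationSeqs {m n : ℕ} {l : List ℕ} (hl : l ≠ []) :
    m :: l ∈ factorizationSeqs n ↔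
      m ∈ n.divisors.erase 1 ∧ l ∈ factorizationSeqs (n / m) := by
  simp only [mem_factorizationSeqs, List.dropLast_cons_of_ne_nil hl, List.mem_cons,
    forall_eq_or_imp, List.prod_cons, Finset.mem_erase, Nat.mem_divisors, ne_eq, hl,
    not_false_eq_true, true_and, reduceCtorEq]
  constructor
  · rintro ⟨⟨hm, hpos⟩, rfl, hm1, hdrop⟩
    have hprod : 0 < l.prod := List.prod_pos hpos
    refine ⟨⟨by omega, Dvd.intro _ rfl, by positivity⟩, hpos, ?_, hdrop⟩
    rw [Nat.mul_div_cancel_left _ (by omega)]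
  · rintro ⟨⟨hm1, hdvd, hn⟩, hpos, hprod, hdrop⟩
    have hm : 0 < m := Nat.pos_of_dvd_of_pos hdvd (Nat.pos_of_ne_zero hn)
    exact ⟨⟨hm, hpos⟩, by rw [hprod, Nat.mul_div_cancel' hdvd], by omega, hdrop⟩

theorem factorizationSeqs_eq_insert {n : ℕ} (hn : 1 ≤ n) :
    factorizationSeqs n = insert [n]
      ((n.divisors.erase 1).biUnion fun m => (factorizationSeqs (n / m)).image (m :: ·)) := by
  ext l
  rcases l with _ | ⟨a, _ | ⟨b, l⟩⟩
  · simp [mem_factorizationSeqs]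
  · simp [mem_factorizationSeqs, eq_comm]
    omega
  · simp [cons_mem_factorizationSeqs]

theorem sum_factorizationSeqs {M : Type*} [AddCommMonoid M] {n : ℕ} (hn : 1 ≤ n)
    (F : List ℕ → M) :
    ∑ l ∈ factorizationSeqs n, F l =
      F [n] + ∑ m ∈ n.divisors.erase 1, ∑ l ∈ factorizationSeqs (n / m), F (m :: l) := by
  rw [factorizationSeqs_eq_insert hn, Finset.sum_insert, Finset.sum_biUnion]
  · simp only [Finset.sum_image fun _ _ _ _ h => List.cons_injective h]
  · intro m₁ _ m₂ _ hne
    simp only [Function.onFun, Finset.disjoint_left, Finset.mem_image]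
    rintro _ ⟨_, _, rfl⟩ ⟨_, _, h⟩
    exact hne (List.cons_eq_cons.1 h).1.symm
  · simp only [Finset.mem_biUnion, Finset.mem_image, List.cons_eq_cons, not_exists, not_and]
    rintro m - l hl rfl rfl
    exact (mem_factorizationSeqs.1 hl).1 rfl

section

variable {M : Type*} [AddCommGroup M]

def inversionTerm (Ψ : ℕ → M → M) (C : ℕ → M) (l : List ℕ) : M :=
  ((-1 : ℤ) ^ (l.length - 1)) • l.dropLast.foldr (fun i r => Ψ i r) (C (l.getLastD 1))

theorem inversionTerm_singleton (Ψ : ℕ → M → M) (C : ℕ → M) (n : ℕ) :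
    inversionTerm Ψ C [n] = C n := by
  simp [inversionTerm]

theorem inversionTerm_cons {Ψ : ℕ → M → M} (C : ℕ → M) {m : ℕ}
    (hadd : ∀ x y, Ψ m (x + y) = Ψ m x + Ψ m y) {l : List ℕ} (hl : l ≠ []) :
    inversionTerm Ψ C (m :: l) = -Ψ m (inversionTerm Ψ C l) := by
  obtain ⟨a, l, rfl⟩ := List.exists_cons_of_ne_nil hl
  have hzsmul (z : ℤ) (x : M) : Ψ m (z • x) = z • Ψ m x :=
    map_zsmul (AddMonoidHom.mk' (Ψ m) hadd) z x
  simp [inversionTerm, List.dropLast_cons_of_ne_nil hl, pow_succ, hzsmul]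

theorem sum_inversionTerm_eq_sub {Ψ : ℕ → M → M} (C : ℕ → M)
    (hadd : ∀ d, 1 ≤ d → ∀ x y, Ψ d (x + y) = Ψ d x + Ψ d y) {n : ℕ} (hn : 1 ≤ n) :
    ∑ l ∈ factorizationSeqs n, inversionTerm Ψ C l =
      C n - ∑ m ∈ n.divisors.erase 1,
        Ψ m (∑ l ∈ factorizationSeqs (n / m), inversionTerm Ψ C l) := by
  rw [sum_factorizationSeqs hn, inversionTerm_singleton, sub_eq_add_neg, ← Finset.sum_neg_distrib]
  refine congrArg _ (Finset.sum_congr rfl fun m hm => ?_)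
  have hadd_m := hadd m (Nat.pos_of_mem_divisors (Finset.mem_of_mem_erase hm))
  rw [show Ψ m (∑ l ∈ factorizationSeqs (n / m), inversionTerm Ψ C l) = _ from
    map_sum (AddMonoidHom.mk' (Ψ m) hadd_m) _ _, ← Finset.sum_neg_distrib]
  exact Finset.sum_congr rfl fun l hl =>
    inversionTerm_cons C hadd_m (mem_factorizationSeqs.1 hl).1

theorem natCast_zsmul_eq_sub_of_sum_divisorsAntidiagonal
    {Ψ : ℕ → M → M} (hone : ∀ x, Ψ 1 x = x) {B C : ℕ → M} {n : ℕ} (hn : 1 ≤ n)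
    (h : ∑ p ∈ n.divisorsAntidiagonal, Ψ p.2 ((p.1 : ℤ) • B p.1) = C n) :
    (n : ℤ) • B n =
      C n - ∑ m ∈ n.divisors.erase 1, Ψ m (((n / m : ℕ) : ℤ) • B (n / m)) := by
  rw [← h, Nat.sum_divisorsAntidiagonal' fun a b => Ψ b ((a : ℤ) • B a),
    ← Finset.add_sum_erase _ _ (Nat.one_mem_divisors.2 (by omega)), Nat.div_one, hone,
    add_sub_cancel_right]

end

/-- **Inversion formula for power structures (general case, no composition law).**
If the operations `Ψ_d` are additive with `Ψ_1 = id`, and `B`, `C` satisfy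
`∑_{km = n} Ψ_m (k • B_k) = C_n` for all `n ≥ 1`, then
`n • B_n = ∑ (-1)^{s-1} (Ψ_{i_1} ∘ ⋯ ∘ Ψ_{i_{s-1}}) (C_{i_s})`, the sum being over all
finite sequences `(i_1, …, i_s)` of positive integers with `i_1 ⋯ i_s = n` and
`i_1, …, i_{s-1} > 1`. -/
theorem adams_inversion_general (R : Type*) [CommRing R] (Ψ : ℕ → R → R)
    (hadd : ∀ d, 1 ≤ d → ∀ x y : R, Ψ d (x + y) = Ψ d x + Ψ d y)
    (hone : ∀ x : R, Ψ 1 x = x)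
    (B C : ℕ → R)
    (hBC : ∀ n : ℕ, 1 ≤ n →
      ∑ p ∈ Nat.divisorsAntidiagonal n, Ψ p.2 ((p.1 : ℤ) • B p.1) = C n) :
    ∀ n : ℕ, 1 ≤ n →
      (n : ℤ) • B n =
        ∑ l ∈ factorizationSeqs n,
          ((-1 : ℤ) ^ (l.length - 1)) •
            (l.dropLast.foldr (fun i r => Ψ i r) (C (l.getLastD 1))) := by
  intro n
  induction n using Nat.strong_induction_on with
  | _ n ih =>
    intro hn
    change _ = ∑ l ∈ factorizationSeqs n, inversionTerm Ψ C l
    rw [natCast_zsmul_eq_sub_of_sum_divisorsAntidiagonal hone hn (hBC n hn),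
      sum_inversionTerm_eq_sub C hadd hn]
    refine congrArg _ (Finset.sum_congr rfl fun m hm => ?_)
    obtain ⟨hm1, hmn, -⟩ : m ≠ 1 ∧ m ∣ n ∧ n ≠ 0 := by simpa using hm
    have hm : 1 < m := by have := Nat.pos_of_dvd_of_pos hmn hn; omega
    rw [ih (n / m) (Nat.div_lt_self hn hm) (Nat.div_pos (Nat.le_of_dvd hn hmn) (by omega))]
    rfl
end

section
/- Let R be a commutative ring and let u, v : ℕ → R be arbitrary functions. Then for every integer a ≥ 1, ∑_{(k,n): kn=a} ∑_{m ∣ n} ∑_{l ∣ k} μ(n/m)·μ(k/l)·u(k·m)·v(l) = ∑_{b ∣ a} μ(a/b)·u(b)·v(b), where the outer sum on the left is over ordered pairs (k,n) of positive integers with k·n = a, and the divisor sums are over positive divisors. -/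
/-!
The sum over `l` is the Dirichlet convolution `V = μ * v` evaluated at `k`. Writing `b = k * m`,
the left side becomes `∑_{b ∣ a} μ(a/b) u(b) ∑_{k ∣ b} V(k)`, and the inner sum is `v(b)` by
Möbius inversion.
-/

open scoped ArithmeticFunction ArithmeticFunction.Moebius

open Finset

/-- Both sides run over the pairs `k ∣ b ∣ a`, parametrised on the left by `b = k * m`. -/
theorem Nat.sum_divisors_sum_divisors_div_mul {M : Type*} [AddCommMonoid M] (f : ℕ → ℕ → M)
    (a : ℕ) :
    ∑ k ∈ a.divisors, ∑ m ∈ (a / k).divisors, f k (k * m) =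
      ∑ b ∈ a.divisors, ∑ k ∈ b.divisors, f k b := by
  rw [sum_sigma', sum_sigma']
  refine sum_nbij' (fun x => ⟨x.1 * x.2, x.1⟩) (fun y => ⟨y.2, y.1 / y.2⟩) ?_ ?_ ?_ ?_
    (fun _ _ => rfl)
  · rintro ⟨k, m⟩ h
    simp only [mem_sigma, Nat.mem_divisors] at h ⊢
    obtain ⟨⟨hka, ha⟩, hm, -⟩ := h
    rw [Nat.dvd_div_iff_mul_dvd hka] at hm
    exact ⟨⟨hm, ha⟩, dvd_mul_right k m, ne_zero_of_dvd_ne_zero ha hm⟩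
  · rintro ⟨b, k⟩ h
    simp only [mem_sigma, Nat.mem_divisors] at h ⊢
    obtain ⟨⟨hba, ha⟩, hkb, hb⟩ := h
    have hka := hkb.trans hba
    exact ⟨⟨hka, ha⟩, Nat.div_dvd_div hkb hba,
      (Nat.div_ne_zero_iff_of_dvd hka).mpr ⟨ha, ne_zero_of_dvd_ne_zero hb hkb⟩⟩
  · rintro ⟨k, m⟩ h
    simp [Nat.mul_div_cancel_left _ (Nat.pos_of_mem_divisors (mem_sigma.mp h).1)]
  · rintro ⟨b, k⟩ h
    simp [Nat.mul_div_cancel' (Nat.dvd_of_mem_divisors (mem_sigma.mp h).2)]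

theorem ArithmeticFunction.sum_divisors_sum_divisors_moebius_smul {M : Type*} [AddCommGroup M]
    (v : ℕ → M) {b : ℕ} (hb : 0 < b) :
    ∑ k ∈ b.divisors, ∑ l ∈ k.divisors, μ (k / l) • v l = v b := by
  refine sum_eq_iff_sum_smul_moebius_eq.mpr (fun n _ => ?_) b hb
  rw [Nat.sum_divisorsAntidiagonal' (f := fun x y => μ x • v y)]

/-- **The key double Möbius sum identity.**
For arbitrary functions `u v : ℕ → R` and every `a ≥ 1`,
`∑_{kn = a} ∑_{m ∣ n} ∑_{l ∣ k} μ(n/m) μ(k/l) u(km) v(l) = ∑_{b ∣ a} μ(a/b) u(b) v(b)`. -/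
theorem double_moebius_sum_collapse (R : Type*) [CommRing R] (u v : ℕ → R) :
    ∀ a : ℕ, 1 ≤ a →
      ∑ p ∈ Nat.divisorsAntidiagonal a, ∑ m ∈ Nat.divisors p.2, ∑ l ∈ Nat.divisors p.1,
        ((μ (p.2 / m) * μ (p.1 / l) : ℤ) • (u (p.1 * m) * v l))
      = ∑ b ∈ Nat.divisors a, (μ (a / b) : ℤ) • (u b * v b) := by
  intro a _
  set V : ℕ → R := fun k => ∑ l ∈ k.divisors, μ (k / l) • v l
  calc _ = ∑ k ∈ a.divisors, ∑ m ∈ (a / k).divisors, μ (a / (k * m)) • (u (k * m) * V k) := by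
        rw [Nat.sum_divisorsAntidiagonal (f := fun k n => ∑ m ∈ n.divisors, ∑ l ∈ k.divisors,
          ((μ (n / m) * μ (k / l) : ℤ) • (u (k * m) * v l)))]
        simp only [V, Nat.div_div_eq_div_mul, mul_sum, smul_sum, mul_smul_comm, smul_smul]
    _ = ∑ b ∈ a.divisors, μ (a / b) • (u b * ∑ k ∈ b.divisors, V k) := by
        rw [Nat.sum_divisors_sum_divisors_div_mul (fun k b => μ (a / b) • (u b * V k))]
        simp only [mul_sum, smul_sum]
    _ = _ := sum_congr rfl fun b hb => by
        rw [ArithmeticFunction.sum_divisors_sum_divisors_moebius_smul v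
          (Nat.pos_of_mem_divisors hb)]
end

section
/- Let R be a commutative ℚ-algebra equipped with Adams operations: ring homomorphisms Ψ_n : R → R for n ≥ 1 with Ψ_1 = id and Ψ_i ∘ Ψ_j = Ψ_{ij} for all i, j ≥ 1. Fix B, X ∈ R. In the formal power series ring R⟦t⟧, equipped with the topology of coefficientwise convergence (product topology, R discrete), the family indexed by integers n ≥ 1 given by F_n := e_n(X) · G_n, where e_n(X) := (1/n) ∑_{m ∣ n} μ(n/m) Ψ_m(X) ∈ R and G_n := ∑_{k≥1} (1/k) Ψ_{nk}(B) t^{nk} ∈ R⟦t⟧, has sum (HasSum) equal to ∑_{s≥1} (1/s) Ψ_s(B·X) t^s. -/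
/-! The `s`-th coefficient of the `n`-th summand vanishes unless `n ∣ s`, and for `n ∣ s` it is
`s⁻¹ Ψ_s(B) ∑_{m ∣ n} μ(n/m) Ψ_m(X)`. Summing over the divisors `n` of `s`, Möbius inversion
collapses the double sum to `Ψ_s(X)`, so each coefficient of the series is reached by a finite
partial sum. -/

open scoped ArithmeticFunction ArithmeticFunction.Moebius

/-- The topology of coefficientwise convergence on `R⟦t⟧`
(the product topology, `R` being discrete). -/
noncomputable instance powerSeriesCoeffwiseTopology (R : Type*) [CommRing R] :
    TopologicalSpace (PowerSeries R) :=
  TopologicalSpace.induced (fun f k => PowerSeries.coeff (R := R) k f)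
    (@Pi.topologicalSpace ℕ (fun _ => R) fun _ => ⊥)

open PowerSeries Finset

theorem PowerSeries.hasSum_of_coeff_eq_sum_finset {R ι : Type*} [CommRing R]
    {f : ι → PowerSeries R} {a : PowerSeries R} (T : ℕ → Finset ι)
    (hsupp : ∀ s, ∀ i ∉ T s, coeff s (f i) = 0)
    (hsum : ∀ s, ∑ i ∈ T s, coeff s (f i) = coeff s a) :
    HasSum f a := by
  let : TopologicalSpace R := ⊥
  have : DiscreteTopology R := ⟨rfl⟩
  change Filter.Tendsto _ _ (@nhds _ (TopologicalSpace.induced _ Pi.topologicalSpace) a)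
  rw [nhds_induced, Filter.tendsto_comap_iff, tendsto_pi_nhds]
  intro s
  have := hasSum_sum_of_ne_finset_zero (L := .unconditional ι) (hsupp s)
  rw [hsum s] at this
  simp only [Function.comp_apply, map_sum]
  exact this

theorem sum_divisors_sum_moebius_smul {M : Type*} [AddCommGroup M] (g : ℕ → M) {s : ℕ}
    (hs : s ≠ 0) :
    ∑ n ∈ s.divisors, ∑ m ∈ n.divisors, (μ (n / m) : ℤ) • g m = g s := by
  refine ArithmeticFunction.sum_eq_iff_sum_smul_moebius_eq.mpr (fun n _ => ?_) s
    (Nat.pos_of_ne_zero hs)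
  exact Nat.sum_divisorsAntidiagonal' (f := fun a b => (μ a : ℤ) • g b)

section Necklace

variable {R : Type*} [CommRing R] [Algebra ℚ R]

/-- `necklaceCoeff (Ψ · X) n` is the exponent `e_n(X)` of the paper and
`rescaledLogSeries (Ψ · B) n` the series `G_n = log λ_{t^n}(Ψ_n B)`. -/
noncomputable def necklaceCoeff (g : ℕ → R) (n : ℕ) : R :=
  (n : ℚ)⁻¹ • ∑ m ∈ n.divisors, (μ (n / m) : ℤ) • g m

noncomputable def rescaledLogSeries (h : ℕ → R) (n : ℕ) : PowerSeries R :=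
  mk fun s => if s ≠ 0 ∧ n ∣ s then ((n : ℚ) / s) • h s else 0

theorem necklaceCoeff_zero (g : ℕ → R) : necklaceCoeff g 0 = 0 := by
  simp [necklaceCoeff]

theorem coeff_necklaceCoeff_smul_rescaledLogSeries (g h : ℕ → R) (n s : ℕ) :
    coeff s (necklaceCoeff g n • rescaledLogSeries h n) =
      if s ≠ 0 ∧ n ∣ s then
        (s : ℚ)⁻¹ • (h s * ∑ m ∈ n.divisors, (μ (n / m) : ℤ) • g m)
      else 0 := by
  rw [coeff_smul, rescaledLogSeries, coeff_mk, necklaceCoeff]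
  split_ifs with hns
  · have hn : (n : ℚ) ≠ 0 := Nat.cast_ne_zero.mpr (ne_zero_of_dvd_ne_zero hns.1 hns.2)
    rw [smul_eq_mul, smul_mul_smul_comm, mul_comm (h s)]
    congr 1
    field_simp
  · exact mul_zero _

theorem hasSum_necklaceCoeff_smul_rescaledLogSeries (g h : ℕ → R) :
    HasSum (fun n => necklaceCoeff g n • rescaledLogSeries h n)
      (mk fun s => if s = 0 then 0 else (s : ℚ)⁻¹ • (h s * g s)) := by
  refine hasSum_of_coeff_eq_sum_finset Nat.divisors (fun s n hn => ?_) (fun s => ?_)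
  · rw [coeff_necklaceCoeff_smul_rescaledLogSeries,
      if_neg fun hns => hn (Nat.mem_divisors.mpr hns.symm)]
  rw [sum_congr rfl fun n hn => by
      rw [coeff_necklaceCoeff_smul_rescaledLogSeries, if_pos (Nat.mem_divisors.mp hn).symm],
    coeff_mk]
  split_ifs with hs
  · simp [hs]
  · rw [← smul_sum, ← mul_sum, sum_divisors_sum_moebius_smul g hs]

end Necklace

theorem hasSum_power_structure_log_form_general (R : Type*) [CommRing R] [Algebra ℚ R]
    (Ψ : ℕ → R →+* R)
    (B X : R) :
    HasSum
      (fun n : {n : ℕ // 1 ≤ n} =>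
        ((((n : ℕ) : ℚ))⁻¹ •
            ∑ m ∈ Nat.divisors (n : ℕ), (μ ((n : ℕ) / m) : ℤ) • Ψ m X : R) •
          (PowerSeries.mk fun s =>
            if s ≠ 0 ∧ (n : ℕ) ∣ s then ((((n : ℕ) : ℚ)) / (s : ℚ)) • Ψ s B else 0))
      (PowerSeries.mk fun s =>
        if s = 0 then 0 else ((s : ℚ))⁻¹ • Ψ s (B * X)) := by
  have hsupp : Function.support
      (fun n => necklaceCoeff (Ψ · X) n • rescaledLogSeries (Ψ · B) n) ⊆ {n | 1 ≤ n} := by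
    refine Function.support_subset_iff'.mpr fun n hn => ?_
    rw [Nat.lt_one_iff.mp (not_le.mp hn), necklaceCoeff_zero, zero_smul]
  simp_rw [map_mul]
  exact (hasSum_subtype_iff_of_support_subset hsupp).mpr
    (hasSum_necklaceCoeff_smul_rescaledLogSeries _ _)

/-- **Logarithmic form of the product formula for `(1-t)^{-B·X}`.**
Let `R` be a commutative `ℚ`-algebra with Adams operations `Ψ_n` (ring homomorphisms,
`Ψ_1 = id`, `Ψ_i ∘ Ψ_j = Ψ_{ij}`).  Then the family (indexed by `n ≥ 1`)
`F_n = e_n(X) • G_n`, where `e_n(X) = (1/n) ∑_{m ∣ n} μ(n/m) Ψ_m(X)` and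
`G_n = ∑_{k≥1} (1/k) Ψ_{nk}(B) t^{nk}`, has sum `∑_{s≥1} (1/s) Ψ_s(B·X) t^s` in `R⟦t⟧`. -/
theorem hasSum_power_structure_log_form (R : Type*) [CommRing R] [Algebra ℚ R]
    (Ψ : ℕ → R →+* R)
    (hone : Ψ 1 = RingHom.id R)
    (hcomp : ∀ i, 1 ≤ i → ∀ j, 1 ≤ j → (Ψ i).comp (Ψ j) = Ψ (i * j))
    (B X : R) :
    HasSum
      (fun n : {n : ℕ // 1 ≤ n} =>
        ((((n : ℕ) : ℚ))⁻¹ •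
            ∑ m ∈ Nat.divisors (n : ℕ), (μ ((n : ℕ) / m) : ℤ) • Ψ m X : R) •
          (PowerSeries.mk fun s =>
            if s ≠ 0 ∧ (n : ℕ) ∣ s then ((((n : ℕ) : ℚ)) / (s : ℚ)) • Ψ s B else 0))
      (PowerSeries.mk fun s =>
        if s = 0 then 0 else ((s : ℚ))⁻¹ • Ψ s (B * X)) :=
  hasSum_power_structure_log_form_general R Ψ B X
end

section
/- In the formal power series ring ℚ⟦t⟧, equipped with the topology of coefficientwise convergence (product topology, ℚ discrete), the family indexed by integers n ≥ 1 given by (μ(n)/n) • L_n, where L_n ∈ ℚ⟦t⟧ is the series whose coefficient of t^m equals n/m if n divides m and m ≥ 1, and 0 otherwise (i.e. L_n = ∑_{k≥1} t^{nk}/k), has sum (HasSum) equal to the series t. -/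
/-!
The coefficient of `t^k` in `(μ(n)/n) • L_n` is `μ(n)/k` when `n ∣ k`, `k ≠ 0`, and `0` otherwise.
So each coefficient of the family is finitely supported, on the divisors of `k`, and sums to
`(∑_{d ∣ k} μ(d)) / k`, which is `1` for `k = 1` and `0` otherwise by Möbius inversion.
-/

open scoped ArithmeticFunction
open scoped ArithmeticFunction.Moebius

/-- The topology of coefficientwise convergence on `ℚ⟦t⟧`
(the product topology, `ℚ` being discrete). -/
noncomputable instance : TopologicalSpace (PowerSeries ℚ) :=
  TopologicalSpace.induced (fun f k => PowerSeries.coeff (R := ℚ) k f)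
    (@Pi.topologicalSpace ℕ (fun _ => ℚ) fun _ => ⊥)

open Filter Finset PowerSeries

theorem PowerSeries.tendsto_nhds_iff_eventually_coeff_eq {α : Type*} {l : Filter α}
    {f : α → ℚ⟦X⟧} {g : ℚ⟦X⟧} :
    Tendsto f l (nhds g) ↔ ∀ k, ∀ᶠ a in l, coeff k (f a) = coeff k g := by
  let : TopologicalSpace ℚ := ⊥
  have : DiscreteTopology ℚ := ⟨rfl⟩
  rw [nhds_induced, tendsto_comap_iff, tendsto_pi_nhds]
  simp only [nhds_discrete, tendsto_pure, Function.comp_apply]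

theorem PowerSeries.hasSum_of_coeff_eq_sum {ι : Type*} {f : ι → ℚ⟦X⟧} {g : ℚ⟦X⟧}
    (T : ℕ → Finset ι) (hT : ∀ k, ∀ i ∉ T k, coeff k (f i) = 0)
    (hsum : ∀ k, ∑ i ∈ T k, coeff k (f i) = coeff k g) : HasSum f g := by
  refine tendsto_nhds_iff_eventually_coeff_eq.mpr fun k =>
    eventually_atTop.mpr ⟨T k, fun s hs => ?_⟩
  rw [map_sum, ← hsum, sum_subset hs fun i _ hi => hT k i hi]

theorem sum_divisors_moebius {R : Type*} [Ring R] (k : ℕ) :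
    ∑ d ∈ k.divisors, (μ d : R) = if k = 1 then 1 else 0 := by
  have h := congrArg (· k) (ArithmeticFunction.coe_moebius_mul_coe_zeta (R := R))
  simpa only [ArithmeticFunction.coe_mul_zeta_apply, ArithmeticFunction.one_apply,
    ArithmeticFunction.intCoe_apply] using h

noncomputable def negLogOneSubXPow (K : Type*) [Field K] (n : ℕ) : K⟦X⟧ :=
  mk fun m => if m ≠ 0 ∧ n ∣ m then (n : K) / m else 0

theorem coeff_moebius_div_smul_negLogOneSubXPow {K : Type*} [Field K] [CharZero K] (n k : ℕ) :
    coeff k (((μ n : K) / n) • negLogOneSubXPow K n) =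
      if k ≠ 0 ∧ n ∣ k then (μ n : K) / k else 0 := by
  rw [negLogOneSubXPow, coeff_smul, coeff_mk, smul_eq_mul]
  split_ifs with h
  · have : (n : K) ≠ 0 := by exact_mod_cast ne_zero_of_dvd_ne_zero h.1 h.2
    field_simp
  · rw [mul_zero]

theorem hasSum_moebius_div_smul_negLogOneSubXPow :
    HasSum (fun n : ℕ => ((μ n : ℚ) / n) • negLogOneSubXPow ℚ n) X := by
  refine hasSum_of_coeff_eq_sum Nat.divisors (fun k n hn => ?_) fun k => ?_
  · rw [coeff_moebius_div_smul_negLogOneSubXPow, if_neg]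
    rwa [Nat.mem_divisors, and_comm] at hn
  · calc ∑ n ∈ k.divisors, coeff k (((μ n : ℚ) / n) • negLogOneSubXPow ℚ n)
        _ = ∑ n ∈ k.divisors, (μ n : ℚ) / k := sum_congr rfl fun n hn => by
          rw [coeff_moebius_div_smul_negLogOneSubXPow, if_pos (Nat.mem_divisors.mp hn).symm]
        _ = coeff k X := by
          rw [← sum_div, sum_divisors_moebius, coeff_X]
          split_ifs with h <;> simp [h]

/-- **Logarithmic form of `e^t = ∏_{n≥1} (1-t^n)^{-μ(n)/n}`.**
The family `n ↦ (μ(n)/n) • L_n` (`n ≥ 1`), where `L_n = ∑_{k≥1} t^{nk}/k` is the series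
whose coefficient of `t^m` is `n/m` if `n ∣ m`, `m ≥ 1`, and `0` otherwise, has sum `t`
in `ℚ⟦t⟧`. -/
theorem hasSum_moebius_div_smul_log : 
    HasSum
      (fun n : {n : ℕ // 1 ≤ n} =>
        ((μ (n : ℕ) : ℚ) / ((n : ℕ) : ℚ)) •
          (PowerSeries.mk fun m =>
            if m ≠ 0 ∧ (n : ℕ) ∣ m then (((n : ℕ) : ℚ)) / (m : ℚ) else 0))
      (PowerSeries.X : PowerSeries ℚ) := by
  have hsupport : Function.support (fun n : ℕ => ((μ n : ℚ) / n) • negLogOneSubXPow ℚ n) ⊆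
      {n | 1 ≤ n} := by
    intro n hn
    by_contra h0
    simp [Nat.lt_one_iff.mp (not_le.mp h0)] at hn
  exact (hasSum_subtype_iff_of_support_subset hsupport).mpr
    hasSum_moebius_div_smul_negLogOneSubXPow
end

section
/- In the ring of formal power series in two variables x, y over ℚ (MvPowerSeries on a two-element index type), equipped with the topology of coefficientwise convergence, the family indexed by pairs (k,m) of positive integers with gcd(k,m) = 1, given by (1/k) • M_{k,m}, where M_{k,m} := ∑_{j≥1} (1/j) x^{jk} y^{jm}, has sum (HasSum) equal to the series ∑_{a≥1, b≥1} (1/a) x^a y^b. -/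
/-!
Every pair `(a, b)` of positive integers is uniquely `j • (k, m)` with `j ≥ 1` and `k, m`
coprime, namely `(k, m) = (a, b) / gcd(a, b)`. Hence the coefficient of `x^a y^b` receives exactly one
nonzero contribution, `(1/k) • (k/a) = 1/a`, and since `ℚ` carries the discrete topology,
coefficientwise convergence of the family reduces to this finite computation.
-/

/-- The formal power series in two variables `x, y` over `ℚ` with the given
coefficient function (`MvPowerSeries (Fin 2) ℚ` is by definition the type of
functions `(Fin 2 →₀ ℕ) → ℚ`; the variable `x` has index `0`, `y` has index `1`). -/
noncomputable def mvMk (f : (Fin 2 →₀ ℕ) → ℚ) : MvPowerSeries (Fin 2) ℚ := f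

/-- The topology of coefficientwise convergence on `ℚ⟦x,y⟧`
(the product topology, `ℚ` being discrete). -/
noncomputable instance : TopologicalSpace (MvPowerSeries (Fin 2) ℚ) :=
  TopologicalSpace.induced (fun f d => MvPowerSeries.coeff (R := ℚ) d f)
    (@Pi.topologicalSpace (Fin 2 →₀ ℕ) (fun _ => ℚ) fun _ => ⊥)

open MvPowerSeries

theorem Nat.eq_div_gcd_of_mul_eq_mul_of_coprime {a b k m : ℕ} (hkm : k.Coprime m) (ha : a ≠ 0)
    (h : b * k = a * m) : k = a / a.gcd b ∧ m = b / a.gcd b := by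
  obtain ⟨j, rfl⟩ : k ∣ a := hkm.dvd_of_dvd_mul_right ⟨b, by rw [← h, mul_comm]⟩
  have hk : k ≠ 0 := left_ne_zero_of_mul ha
  have hj : j ≠ 0 := right_ne_zero_of_mul ha
  obtain rfl : b = j * m :=
    Nat.eq_of_mul_eq_mul_left (Nat.pos_of_ne_zero hk) (by rw [mul_comm k b, h, mul_assoc])
  have hgcd : (k * j).gcd (j * m) = j := by rw [mul_comm k j, Nat.gcd_mul_left, hkm, mul_one]
  rw [hgcd]
  exact ⟨(Nat.mul_div_cancel _ (Nat.pos_of_ne_zero hj)).symm,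
    (Nat.mul_div_cancel_left _ (Nat.pos_of_ne_zero hj)).symm⟩

theorem Nat.dvd_and_mul_eq_mul_iff_eq_div_gcd {a b k m : ℕ} (hkm : k.Coprime m) (hm : m ≠ 0)
    (ha : a ≠ 0) :
    k ∣ a ∧ b * k = a * m ↔ b ≠ 0 ∧ (k, m) = (a / a.gcd b, b / a.gcd b) := by
  constructor
  · rintro ⟨-, h⟩
    refine ⟨fun hb => ?_, Prod.ext_iff.mpr (Nat.eq_div_gcd_of_mul_eq_mul_of_coprime hkm ha h)⟩
    rw [hb, zero_mul] at h
    exact mul_ne_zero ha hm h.symm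
  · rintro ⟨-, h⟩
    obtain ⟨rfl, rfl⟩ := Prod.ext_iff.mp h
    exact ⟨Nat.div_dvd_of_dvd (Nat.gcd_dvd_left a b), by
      rw [← Nat.mul_div_assoc _ (Nat.gcd_dvd_left a b),
        ← Nat.mul_div_assoc _ (Nat.gcd_dvd_right a b), mul_comm]⟩

theorem hasSum_of_forall_coeff_eq_sum_finset {ι : Type*} {f : ι → MvPowerSeries (Fin 2) ℚ}
    {S : MvPowerSeries (Fin 2) ℚ}
    (h : ∀ d, ∃ s : Finset ι,
      (∀ i ∉ s, coeff d (f i) = 0) ∧ ∑ i ∈ s, coeff d (f i) = coeff d S) :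
    HasSum f S := by
  let _ : TopologicalSpace ℚ := ⊥
  have hPi : letI := WithPiTopology.instTopologicalSpace ℚ (σ := Fin 2); HasSum f S := by
    refine WithPiTopology.hasSum_iff_hasSum_coeff.mpr fun d => ?_
    obtain ⟨s, hs, hsum⟩ := h d
    exact hsum ▸ hasSum_sum_of_ne_finset_zero hs
  -- the topology on `ℚ⟦x,y⟧` is the product topology, induced along the identity
  convert hPi
  exact @induced_id _ (WithPiTopology.instTopologicalSpace ℚ)

abbrev CoprimePosPair := {p : ℕ × ℕ // 1 ≤ p.1 ∧ 1 ≤ p.2 ∧ Nat.gcd p.1 p.2 = 1}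

def CoprimePosPair.ofNeZero {a b : ℕ} (ha : a ≠ 0) (hb : b ≠ 0) : CoprimePosPair :=
  ⟨(a / a.gcd b, b / a.gcd b), Nat.div_gcd_pos_of_pos_left b (Nat.pos_of_ne_zero ha),
    Nat.div_gcd_pos_of_pos_right a (Nat.pos_of_ne_zero hb),
    Nat.coprime_div_gcd_div_gcd (Nat.gcd_pos_of_pos_left b (Nat.pos_of_ne_zero ha))⟩

noncomputable def CoprimePosPair.summand (p : CoprimePosPair) : MvPowerSeries (Fin 2) ℚ :=
  (p.1.1 : ℚ)⁻¹ • mvMk fun d =>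
    if d 0 ≠ 0 ∧ p.1.1 ∣ d 0 ∧ d 1 * p.1.1 = d 0 * p.1.2 then (p.1.1 : ℚ) / (d 0 : ℚ) else 0

theorem coeff_mvMk (f : (Fin 2 →₀ ℕ) → ℚ) (d : Fin 2 →₀ ℕ) : coeff d (mvMk f) = f d := rfl

theorem CoprimePosPair.coeff_summand (p : CoprimePosPair) (d : Fin 2 →₀ ℕ) :
    coeff d p.summand =
      if d 0 ≠ 0 ∧ d 1 ≠ 0 ∧ p.1 = (d 0 / (d 0).gcd (d 1), d 1 / (d 0).gcd (d 1))
      then ((d 0 : ℕ) : ℚ)⁻¹ else 0 := by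
  obtain ⟨⟨k, m⟩, hk, hm, hkm⟩ := p
  rw [summand, coeff_smul, coeff_mvMk]
  by_cases ha : d 0 = 0
  · simp [ha]
  simp only [ne_eq, ha, not_false_eq_true, true_and,
    ← Nat.dvd_and_mul_eq_mul_iff_eq_div_gcd hkm (by omega : m ≠ 0) ha]
  split_ifs
  · field_simp
  · rw [mul_zero]

/-- **Logarithmic form of `∏_{gcd(k,m)=1} (1-x^k y^m)^{1/k} = (1-x)^{y/(1-y)}`.**
The family indexed by coprime pairs `(k,m)` of positive integers, given by
`(1/k) • M_{k,m}` where `M_{k,m} = ∑_{j≥1} (1/j) x^{jk} y^{jm}` (so the coefficient of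
`x^a y^b` in `M_{k,m}` is `k/a` when `(a,b) = (jk,jm)` for some `j ≥ 1`, and `0`
otherwise), has sum `∑_{a≥1,b≥1} (1/a) x^a y^b` in `ℚ⟦x,y⟧`. -/
theorem hasSum_coprime_pairs_log_form :
    HasSum
      (fun p : {p : ℕ × ℕ // 1 ≤ p.1 ∧ 1 ≤ p.2 ∧ Nat.gcd p.1 p.2 = 1} =>
        (((p.1.1 : ℚ))⁻¹) •
          mvMk fun d =>
            if d 0 ≠ 0 ∧ p.1.1 ∣ d 0 ∧ d 1 * p.1.1 = d 0 * p.1.2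
            then (p.1.1 : ℚ) / (d 0 : ℚ) else 0)
      (mvMk fun d => if d 0 ≠ 0 ∧ d 1 ≠ 0 then ((d 0 : ℕ) : ℚ)⁻¹ else 0) := by
  change HasSum (fun p : CoprimePosPair => p.summand) _
  refine hasSum_of_forall_coeff_eq_sum_finset fun d => ?_
  simp only [CoprimePosPair.coeff_summand, coeff_mvMk]
  by_cases hd : d 0 ≠ 0 ∧ d 1 ≠ 0
  · refine ⟨{.ofNeZero hd.1 hd.2}, fun p hp => if_neg fun h => hp ?_, ?_⟩
    · exact Finset.mem_singleton.mpr (Subtype.ext h.2.2)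
    · rw [Finset.sum_singleton, if_pos ⟨hd.1, hd.2, rfl⟩, if_pos hd]
  · exact ⟨∅, fun p _ => if_neg fun h => hd ⟨h.1, h.2.1⟩, by rw [Finset.sum_empty, if_neg hd]⟩
end

section
/- Let R be a commutative ring and let (Ψ_d)_{d≥1} be Adams operations on R: each Ψ_d is a ring homomorphism, Ψ_1 = id, and Ψ_i ∘ Ψ_j = Ψ_{ij}. Let a ∈ R and suppose B : ℕ → R satisfies, for every n ≥ 1, ∑_{(k,m): km=n} Ψ_m(k·B_k) = −(−a)^n. Then for every n ≥ 1, n·B_n = −∑_{d ∣ n} μ(d)·Ψ_d((−a)^{n/d}) = −∑_{d ∣ n} μ(d)·(−Ψ_d(a))^{n/d}. -/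
open scoped ArithmeticFunction ArithmeticFunction.Moebius

/-!
Applying `Ψ_{n/q}` to the relation at a divisor `q ∣ n` untwists it into an ordinary divisor sum
`∑_{i ∣ q} Ψ_{n/i}(i • B_i) = Ψ_{n/q}(-(-a)^q)`, because `Ψ_{n/q} ∘ Ψ_{q/i} = Ψ_{n/i}`.
Möbius inversion over the divisors of `n` then recovers `Ψ_1(n • B_n) = n • B_n`.
-/

open Finset

section AdamsOperations

variable {R : Type*} [CommRing R] {Ψ : ℕ → R →+* R}

theorem adams_map_sum_divisorsAntidiagonal
    (hcomp : ∀ i, 1 ≤ i → ∀ j, 1 ≤ j → (Ψ i).comp (Ψ j) = Ψ (i * j))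
    (c : ℕ → R) {n q : ℕ} (hn : n ≠ 0) (hqn : q ∣ n) :
    Ψ (n / q) (∑ p ∈ q.divisorsAntidiagonal, Ψ p.2 (c p.1)) =
      ∑ i ∈ q.divisors, Ψ (n / i) (c i) := by
  rw [map_sum, Nat.sum_divisorsAntidiagonal fun k m => Ψ (n / q) (Ψ m (c k))]
  refine sum_congr rfl fun i hi => ?_
  obtain ⟨hiq, hq⟩ := Nat.mem_divisors.mp hi
  have hnq : 1 ≤ n / q := Nat.div_pos (Nat.le_of_dvd (Nat.pos_of_ne_zero hn) hqn)
    (Nat.pos_of_ne_zero hq)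
  have hqi : 1 ≤ q / i := Nat.div_pos (Nat.le_of_dvd (Nat.pos_of_ne_zero hq) hiq)
    (Nat.pos_of_dvd_of_pos hiq (Nat.pos_of_ne_zero hq))
  rw [← RingHom.comp_apply, hcomp _ hnq _ hqi, Nat.div_mul_div hqn hiq]

theorem adams_moebius_inversion_s8 (hone : Ψ 1 = RingHom.id R)
    (hcomp : ∀ i, 1 ≤ i → ∀ j, 1 ≤ j → (Ψ i).comp (Ψ j) = Ψ (i * j))
    {c h : ℕ → R}
    (hch : ∀ n, 1 ≤ n → ∑ p ∈ n.divisorsAntidiagonal, Ψ p.2 (c p.1) = h n)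
    {n : ℕ} (hn : 1 ≤ n) :
    c n = ∑ d ∈ n.divisors, (μ d : ℤ) • Ψ d (h (n / d)) := by
  have hn0 : n ≠ 0 := Nat.one_le_iff_ne_zero.mp hn
  have untwisted : ∀ q > 0, q ∈ {m | m ∣ n} →
      ∑ i ∈ q.divisors, Ψ (n / i) (c i) = Ψ (n / q) (h q) := fun q hq hqn => by
    rw [← hch q hq, adams_map_sum_divisorsAntidiagonal hcomp c hn0 hqn]
  have inverted := (ArithmeticFunction.sum_eq_iff_sum_smul_moebius_eq_on {m | m ∣ n}
    (fun _ _ hmk hk => hmk.trans hk)).mp untwisted n hn dvd_rfl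
  rw [Nat.div_self hn, hone, RingHom.id_apply] at inverted
  rw [← inverted, Nat.sum_divisorsAntidiagonal fun d q => (μ d : ℤ) • Ψ (n / q) (h q)]
  exact sum_congr rfl fun d hd => by rw [Nat.div_div_self (Nat.dvd_of_mem_divisors hd) hn0]

end AdamsOperations

/-- **The exponents in the decomposition of `1 + a t` as `∏ (1 - t^k)^{-B_k}`.**
If the Adams operations `Ψ_d` are ring homomorphisms with `Ψ_1 = id` and
`Ψ_i ∘ Ψ_j = Ψ_{ij}`, and `B` satisfies `∑_{km = n} Ψ_m (k • B_k) = -(-a)^n` for all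
`n ≥ 1`, then `n • B_n = -∑_{d ∣ n} μ(d) • Ψ_d ((-a)^{n/d}) = -∑_{d ∣ n} μ(d) • (-Ψ_d a)^{n/d}`. -/
theorem adams_inversion_one_add_at (R : Type*) [CommRing R] (Ψ : ℕ → R →+* R)
    (hone : Ψ 1 = RingHom.id R)
    (hcomp : ∀ i, 1 ≤ i → ∀ j, 1 ≤ j → (Ψ i).comp (Ψ j) = Ψ (i * j))
    (a : R) (B : ℕ → R)
    (hB : ∀ n : ℕ, 1 ≤ n →
      ∑ p ∈ Nat.divisorsAntidiagonal n, Ψ p.2 ((p.1 : ℤ) • B p.1) = -(-a) ^ n) :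
    ∀ n : ℕ, 1 ≤ n →
      (n : ℤ) • B n = -∑ d ∈ Nat.divisors n, (μ d : ℤ) • Ψ d ((-a) ^ (n / d)) ∧
      (-∑ d ∈ Nat.divisors n, (μ d : ℤ) • Ψ d ((-a) ^ (n / d))
        = -∑ d ∈ Nat.divisors n, (μ d : ℤ) • (-(Ψ d a)) ^ (n / d)) := by
  intro n hn
  constructor
  · rw [adams_moebius_inversion_s8 (c := fun k => (k : ℤ) • B k) hone hcomp hB hn]
    simp only [map_neg, smul_neg, sum_neg_distrib]
  · simp only [map_pow, map_neg]
end
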